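/- (Hadamard gadget.) With B₊, B₋, CZ, SWAP, K₊ as defined, the post-selected Hadamard-gadget identities hold: B₊ · CZ · SWAP · K₊ = (1/√2) • H, and B₋ · CZ · SWAP · K₊ = (1/√2) • (X · H). In other words, preparing an ancilla in |+⟩, swapping it with the data qubit, applying CZ, and measuring the ancilla in the X basis implements H on the data qubit, up to normalization, with an X correction in the case of the |−⟩ outcome. -/
import Mathlib


noncomputable section

/-- The Hadamard gate. -/
def Hmat : Matrix (Fin 2) (Fin 2) ℂ := ((Real.sqrt 2 : ℂ))⁻¹ • !![1, 1; 1, -1]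

/-- The Pauli `X` gate. -/
def Xg : Matrix (Fin 2) (Fin 2) ℂ := !![0, 1; 1, 0]

/-- The controlled-`Z` gate. -/
def CZ : Matrix (Fin 2 × Fin 2) (Fin 2 × Fin 2) ℂ :=
  Matrix.diagonal fun p => if p.1 = 1 ∧ p.2 = 1 then -1 else 1

/-- The SWAP gate: the permutation matrix of `(a,b) ↦ (b,a)`. -/
def SWAP : Matrix (Fin 2 × Fin 2) (Fin 2 × Fin 2) ℂ :=
  Matrix.of fun p q => if q = (p.2, p.1) then 1 else 0

/-- The isometry `ψ ↦ ψ ⊗ |+⟩` preparing the second qubit in `|+⟩`. -/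
def Kplus : Matrix (Fin 2 × Fin 2) (Fin 2) ℂ :=
  Matrix.of fun p c => (if p.1 = c then 1 else 0) * ((Real.sqrt 2 : ℂ))⁻¹

/-- `⟨+|` applied to the second qubit. -/
def Bplus : Matrix (Fin 2) (Fin 2 × Fin 2) ℂ :=
  Matrix.of fun a p => (if a = p.1 then 1 else 0) * ((Real.sqrt 2 : ℂ))⁻¹

/-- `⟨-|` applied to the second qubit. -/
def Bminus : Matrix (Fin 2) (Fin 2 × Fin 2) ℂ :=
  Matrix.of fun a p => (if a = p.1 then 1 else 0) * (-1 : ℂ) ^ (p.2 : ℕ) * ((Real.sqrt 2 : ℂ))⁻¹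

theorem stmt18 :
    Bplus * CZ * SWAP * Kplus = ((Real.sqrt 2 : ℂ))⁻¹ • Hmat ∧
    Bminus * CZ * SWAP * Kplus = ((Real.sqrt 2 : ℂ))⁻¹ • (Xg * Hmat) := by
  have h2 : ((Real.sqrt 2 : ℂ))⁻¹ * ((Real.sqrt 2 : ℂ))⁻¹ = (2 : ℂ)⁻¹ := by
    rw [← mul_inv, ← Complex.ofReal_mul, Real.mul_self_sqrt (by norm_num)]; norm_num
  constructor <;>
  · ext i j
    fin_cases i <;> fin_cases j <;>
    simp [Bplus, Bminus, CZ, SWAP, Kplus, Hmat, Xg, Matrix.mul_apply, Fintype.sum_prod_type,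
      Fin.sum_univ_two, Matrix.diagonal, h2]
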